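/- arXiv:2307.09719 — 2 statements merged into one kernel-verified Lean document; each statement's English description precedes it below -/
import Mathlib

section
/- For a discrete-time time-varying linear system x(k+1) = A(k)x(k) + B(k)u(k) on k = 0,...,N, the terminal state ξ is reachable at time N+1 from the initial state x (i.e., there exists a control sequence u(0),...,u(N) steering x(0)=x to x(N+1)=ξ) if and only if ξ - Φ_A x lies in the range of the reachability Gramian G₁ = Σ_{k=0}^{N} Φ_{k+1} B(k) B(k)' Φ_{k+1}', where Φ_A = A(N)···A(0) and Φ_{k+1} = A(N)···A(k+1) (with Φ_{N+1} = I). -/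
open Matrix

/-- `transMat A N k` is the product `A(N) * A(N-1) * ⋯ * A(k)` for `k ≤ N`,
and the identity matrix for `k > N`. -/
noncomputable def transMat {n : ℕ} (A : ℕ → Matrix (Fin n) (Fin n) ℝ) (N : ℕ) (k : ℕ) :
    Matrix (Fin n) (Fin n) ℝ :=
  if _ : k ≤ N then transMat A N (k + 1) * A k else 1
termination_by N + 1 - k
decreasing_by omega

/-!
Variation of constants gives `x(N+1) = Φ_A x + ∑ₖ Φ_{k+1} B(k) u(k)`, so `ξ` is reachable iff
`ξ - Φ_A x` lies in the range of `u ↦ ∑ₖ Φ_{k+1} B(k) u(k)`. This map is the block row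
`L = [Φ_1 B(0) | ⋯ | Φ_{N+1} B(N)]`, and `G₁ = L Lᵀ`. Over an ordered field `L Lᵀ` and `L` have
the same range: one range contains the other and both have the same rank.
-/

namespace Matrix

variable {ι m p R : Type*} [Fintype p]

theorem range_mulVecLin_self_mul_transpose [Fintype m] [Field R] [LinearOrder R]
    [IsStrictOrderedRing R] (M : Matrix m p R) :
    LinearMap.range (M * Mᵀ).mulVecLin = LinearMap.range M.mulVecLin :=
  Submodule.eq_of_le_of_finrank_eq
    (fun _ ⟨v, hv⟩ => ⟨Mᵀ *ᵥ v, by rwa [mulVecLin_apply, mulVec_mulVec]⟩)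
    (rank_self_mul_transpose M)

/-- The block row `[M k₁ | M k₂ | ⋯]`, with column `(k, a)` the column `a` of `M k`. -/
def blockRow (M : ι → Matrix m p R) : Matrix m (ι × p) R :=
  of fun i q => M q.1 i q.2

section blockRow

variable [Fintype ι] [NonUnitalNonAssocSemiring R]

theorem blockRow_mulVec (M : ι → Matrix m p R) (v : ι × p → R) :
    blockRow M *ᵥ v = ∑ k, M k *ᵥ fun a => v (k, a) := by
  ext i
  simp only [mulVec, dotProduct, blockRow, of_apply, Finset.sum_apply, Fintype.sum_prod_type]

theorem blockRow_mul_transpose (M : ι → Matrix m p R) :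
    blockRow M * (blockRow M)ᵀ = ∑ k, M k * (M k)ᵀ := by
  ext i j
  simp only [mul_apply, transpose_apply, blockRow, of_apply, sum_apply, Fintype.sum_prod_type]

end blockRow

theorem exists_sum_mulVec_eq_iff_exists_sum_mul_transpose_mulVec_eq [Fintype m] [Field R]
    [LinearOrder R] [IsStrictOrderedRing R] (s : Finset ι) (M : ι → Matrix m p R) (y : m → R) :
    (∃ u : ι → p → R, ∑ k ∈ s, M k *ᵥ u k = y) ↔ ∃ ζ, (∑ k ∈ s, M k * (M k)ᵀ) *ᵥ ζ = y := by
  classical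
  set L := blockRow fun k : s => M k
  have hrange : (∃ u : ι → p → R, ∑ k ∈ s, M k *ᵥ u k = y) ↔ y ∈ LinearMap.range L.mulVecLin := by
    constructor
    · rintro ⟨u, rfl⟩
      refine ⟨fun q => u q.1 q.2, ?_⟩
      rw [mulVecLin_apply, blockRow_mulVec, Finset.sum_coe_sort s fun k => M k *ᵥ u k]
    · rintro ⟨v, rfl⟩
      refine ⟨fun k a => if h : k ∈ s then v (⟨k, h⟩, a) else 0, ?_⟩
      rw [mulVecLin_apply, blockRow_mulVec, ← Finset.sum_coe_sort]
      refine Finset.sum_congr rfl fun k _ => ?_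
      simp only [k.2, dite_true]
  have hgram : L * Lᵀ = ∑ k ∈ s, M k * (M k)ᵀ := by
    rw [blockRow_mul_transpose, Finset.sum_coe_sort s fun k => M k * (M k)ᵀ]
  rw [hrange, ← range_mulVecLin_self_mul_transpose, hgram]
  rfl

end Matrix

section transMat

variable {n : ℕ} (A : ℕ → Matrix (Fin n) (Fin n) ℝ)

theorem transMat_of_lt {N k : ℕ} (h : N < k) : transMat A N k = 1 := by
  rw [transMat, dif_neg h.not_ge]

theorem transMat_of_le {N k : ℕ} (h : k ≤ N) : transMat A N k = transMat A N (k + 1) * A k := by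
  rw [transMat, dif_pos h]

theorem transMat_succ_of_le {N k : ℕ} (h : k ≤ N + 1) :
    transMat A (N + 1) k = A (N + 1) * transMat A N k := by
  induction h using Nat.decreasingInduction with
  | self =>
    rw [transMat_of_le A le_rfl, transMat_of_lt A (by omega), transMat_of_lt A (by omega),
      Matrix.one_mul, Matrix.mul_one]
  | of_succ k hk ih =>
    rw [transMat_of_le A hk.le, transMat_of_le A (Nat.lt_succ_iff.mp hk), ih, Matrix.mul_assoc]

theorem state_eq_transMat_mulVec_add_sum {m : ℕ} (B : ℕ → Matrix (Fin n) (Fin m) ℝ)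
    (x : ℕ → Fin n → ℝ) (u : ℕ → Fin m → ℝ) (N : ℕ)
    (hx : ∀ k ≤ N, x (k + 1) = A k *ᵥ x k + B k *ᵥ u k) :
    x (N + 1) = transMat A N 0 *ᵥ x 0 +
      ∑ k ∈ Finset.range (N + 1), (transMat A N (k + 1) * B k) *ᵥ u k := by
  induction N with
  | zero => simp [hx 0 le_rfl, transMat_of_le A le_rfl, transMat_of_lt A zero_lt_one]
  | succ N ih =>
    have hsum : A (N + 1) *ᵥ ∑ k ∈ Finset.range (N + 1), (transMat A N (k + 1) * B k) *ᵥ u k =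
        ∑ k ∈ Finset.range (N + 1), (transMat A (N + 1) (k + 1) * B k) *ᵥ u k := by
      rw [mulVec_sum]
      refine Finset.sum_congr rfl fun k hk => ?_
      rw [mulVec_mulVec, ← Matrix.mul_assoc, transMat_succ_of_le A (Finset.mem_range.mp hk)]
    rw [hx (N + 1) le_rfl, ih fun k hk => hx k (by omega), Finset.sum_range_succ _ (N + 1),
      transMat_of_lt A (N + 1).lt_succ_self, Matrix.one_mul, transMat_succ_of_le A (N + 1).zero_le,
      mulVec_add, hsum, mulVec_mulVec, add_assoc]

end transMat

/-- The terminal state `ξ` is reachable at time `N+1` from `x0` iff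
`ξ - Φ_A x0` lies in the range of the reachability Gramian `G₁`. -/
theorem reachability_criterion {n m N : ℕ}
    (A : ℕ → Matrix (Fin n) (Fin n) ℝ) (B : ℕ → Matrix (Fin n) (Fin m) ℝ)
    (x0 ξ : Fin n → ℝ) :
    (∃ (x : ℕ → Fin n → ℝ) (u : ℕ → Fin m → ℝ),
        x 0 = x0 ∧ (∀ k ≤ N, x (k + 1) = A k *ᵥ x k + B k *ᵥ u k) ∧ x (N + 1) = ξ)
      ↔ ∃ ζ : Fin n → ℝ,
        (∑ k ∈ Finset.range (N + 1),
            transMat A N (k + 1) * B k * (B k)ᵀ * (transMat A N (k + 1))ᵀ) *ᵥ ζ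
          = ξ - transMat A N 0 *ᵥ x0 := by
  have hgram : ∀ k, transMat A N (k + 1) * B k * (B k)ᵀ * (transMat A N (k + 1))ᵀ =
      (transMat A N (k + 1) * B k) * (transMat A N (k + 1) * B k)ᵀ := fun k => by
    rw [transpose_mul, Matrix.mul_assoc]
  simp only [hgram]
  rw [← exists_sum_mulVec_eq_iff_exists_sum_mul_transpose_mulVec_eq]
  constructor
  · rintro ⟨x, u, rfl, hx, rfl⟩
    exact ⟨u, by rw [state_eq_transMat_mulVec_add_sum A B x u N hx, add_sub_cancel_left]⟩
  · rintro ⟨u, hu⟩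
    let x : ℕ → Fin n → ℝ := fun k => Nat.rec x0 (fun k xk => A k *ᵥ xk + B k *ᵥ u k) k
    refine ⟨x, u, rfl, fun k _ => rfl, ?_⟩
    rw [state_eq_transMat_mulVec_add_sum A B x u N fun k _ => rfl, hu]
    exact add_sub_cancel _ _
end

section
/- Define the Q-function by the backward recursion Q(s) = x(s)'Qx(s) + u*(s)'Ru*(s) + Q(s+1) under the optimal controls u*(k) = K(k)x(k) + K₁(k)λ, with Q(N+1) = x(N+1)'Hx(N+1) + 2λ'x(N+1). Then Q(s) = x(s)'P(s)x(s) + 2x(s)'Φ(s,N)'λ − λ'G(s)λ for all s = 0,...,N+1, where P is the Riccati solution, Φ(s,N) = A_c(N)···A_c(s), G(s) = Σ_{j=s}^{N} Φ(j+1,N)B̄(j)Φ(j+1,N)', K₁(k) = −Γ(k)⁻¹B(k)'Φ(k+1,N)', and B̄(k) = B(k)Γ(k)⁻¹B(k)'. -/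
open Matrix

private lemma mulVec_dp {n p : ℕ} (M : Matrix (Fin p) (Fin n) ℝ) (a : Fin n → ℝ)
    (w : Fin p → ℝ) : (M *ᵥ a) ⬝ᵥ w = a ⬝ᵥ (Mᵀ *ᵥ w) := by
  rw [dotProduct_comm, dotProduct_mulVec, dotProduct_comm, ← Matrix.mulVec_transpose]

/-- Expansion of one Bellman backward step as a quadratic/linear form identity. -/
private lemma key_expand {n m : ℕ} (x l : Fin n → ℝ)
    (Qm P' Ac D Φ' G' : Matrix (Fin n) (Fin n) ℝ)
    (K K₁ : Matrix (Fin m) (Fin n) ℝ) (R : Matrix (Fin m) (Fin m) ℝ)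
    (h2 : Kᵀ * (R * K₁) = -(Acᵀ * (P' * D)))
    (h2t : K₁ᵀ * (R * K) = -(Dᵀ * (P' * Ac)))
    (h3 : Dᵀ * Φ'ᵀ = -(K₁ᵀ * (R * K₁) + Dᵀ * (P' * D))) :
    x ⬝ᵥ Qm *ᵥ x + (K *ᵥ x + K₁ *ᵥ l) ⬝ᵥ R *ᵥ (K *ᵥ x + K₁ *ᵥ l)
      + ((Ac *ᵥ x + D *ᵥ l) ⬝ᵥ P' *ᵥ (Ac *ᵥ x + D *ᵥ l)
        + 2 * ((Ac *ᵥ x + D *ᵥ l) ⬝ᵥ Φ'ᵀ *ᵥ l) - l ⬝ᵥ G' *ᵥ l)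
    = x ⬝ᵥ (Qm + Kᵀ * R * K + Acᵀ * P' * Ac) *ᵥ x + 2 * (x ⬝ᵥ (Φ' * Ac)ᵀ *ᵥ l)
      - l ⬝ᵥ ((K₁ᵀ * R * K₁ + Dᵀ * P' * D) + G') *ᵥ l := by
  simp only [Matrix.mulVec_add, Matrix.add_mulVec, dotProduct_add, add_dotProduct,
    Matrix.mulVec_mulVec, mulVec_dp, Matrix.transpose_mul, Matrix.transpose_transpose,
    Matrix.mul_assoc, h2, h2t, h3, Matrix.neg_mulVec, dotProduct_neg, neg_add,
    Matrix.add_mulVec]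
  ring

section RiccatiAlgebra

variable {n m : ℕ} (A : Matrix (Fin n) (Fin n) ℝ) (B : Matrix (Fin n) (Fin m) ℝ)
  (P' Q Φ' : Matrix (Fin n) (Fin n) ℝ) (R Γ : Matrix (Fin m) (Fin m) ℝ)

private lemma ric1 (hP's : P'ᵀ = P') (hΓdef : Γ = R + Bᵀ * P' * B) (hΓis : Γ⁻¹ᵀ = Γ⁻¹)
    (hc1 : ∀ X : Matrix (Fin m) (Fin n) ℝ, Γ⁻¹ * (Γ * X) = X)
    (hc2 : ∀ X : Matrix (Fin m) (Fin n) ℝ, Γ * (Γ⁻¹ * X) = X) :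
    Q + (-(Γ⁻¹ * (Bᵀ * P' * A)))ᵀ * R * (-(Γ⁻¹ * (Bᵀ * P' * A)))
      + (A + B * (-(Γ⁻¹ * (Bᵀ * P' * A))))ᵀ * P' * (A + B * (-(Γ⁻¹ * (Bᵀ * P' * A))))
    = Aᵀ * P' * A + Q - Aᵀ * P' * B * Γ⁻¹ * (Bᵀ * P' * A) := by
  have hR' : R = Γ - Bᵀ * P' * B := by rw [hΓdef]; abel
  rw [hR']
  simp only [Matrix.transpose_neg, Matrix.transpose_mul, Matrix.transpose_add,
    Matrix.transpose_transpose, hP's, hΓis, Matrix.mul_add, Matrix.add_mul,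
    Matrix.mul_sub, Matrix.sub_mul, Matrix.neg_mul, Matrix.mul_neg, neg_neg,
    Matrix.mul_assoc, hc1, hc2]
  abel

private lemma ric2 (hP's : P'ᵀ = P') (hΓdef : Γ = R + Bᵀ * P' * B) (hΓis : Γ⁻¹ᵀ = Γ⁻¹)
    (hc1 : ∀ X : Matrix (Fin m) (Fin n) ℝ, Γ⁻¹ * (Γ * X) = X)
    (hc2 : ∀ X : Matrix (Fin m) (Fin n) ℝ, Γ * (Γ⁻¹ * X) = X) :
    (-(Γ⁻¹ * (Bᵀ * P' * A)))ᵀ * (R * (-(Γ⁻¹ * (Bᵀ * Φ'ᵀ))))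
    = -((A + B * (-(Γ⁻¹ * (Bᵀ * P' * A))))ᵀ * (P' * (B * (-(Γ⁻¹ * (Bᵀ * Φ'ᵀ)))))) := by
  have hR' : R = Γ - Bᵀ * P' * B := by rw [hΓdef]; abel
  rw [hR']
  simp only [Matrix.transpose_neg, Matrix.transpose_mul, Matrix.transpose_add,
    Matrix.transpose_transpose, hP's, hΓis, Matrix.mul_add, Matrix.add_mul,
    Matrix.mul_sub, Matrix.sub_mul, Matrix.neg_mul, Matrix.mul_neg, neg_neg,
    Matrix.mul_assoc, hc1, hc2]
  abel

private lemma ric2t (hP's : P'ᵀ = P') (hΓdef : Γ = R + Bᵀ * P' * B) (hΓis : Γ⁻¹ᵀ = Γ⁻¹)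
    (hc1 : ∀ X : Matrix (Fin m) (Fin n) ℝ, Γ⁻¹ * (Γ * X) = X)
    (hc2 : ∀ X : Matrix (Fin m) (Fin n) ℝ, Γ * (Γ⁻¹ * X) = X) :
    (-(Γ⁻¹ * (Bᵀ * Φ'ᵀ)))ᵀ * (R * (-(Γ⁻¹ * (Bᵀ * P' * A))))
    = -((B * (-(Γ⁻¹ * (Bᵀ * Φ'ᵀ))))ᵀ * (P' * (A + B * (-(Γ⁻¹ * (Bᵀ * P' * A)))))) := by
  have hR' : R = Γ - Bᵀ * P' * B := by rw [hΓdef]; abel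
  rw [hR']
  simp only [Matrix.transpose_neg, Matrix.transpose_mul, Matrix.transpose_add,
    Matrix.transpose_transpose, hP's, hΓis, Matrix.mul_add, Matrix.add_mul,
    Matrix.mul_sub, Matrix.sub_mul, Matrix.neg_mul, Matrix.mul_neg, neg_neg,
    Matrix.mul_assoc, hc1, hc2]
  abel

private lemma ric3 (hP's : P'ᵀ = P') (hΓdef : Γ = R + Bᵀ * P' * B) (hΓis : Γ⁻¹ᵀ = Γ⁻¹)
    (hc1 : ∀ X : Matrix (Fin m) (Fin n) ℝ, Γ⁻¹ * (Γ * X) = X)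
    (hc2 : ∀ X : Matrix (Fin m) (Fin n) ℝ, Γ * (Γ⁻¹ * X) = X) :
    (-(Γ⁻¹ * (Bᵀ * Φ'ᵀ)))ᵀ * R * (-(Γ⁻¹ * (Bᵀ * Φ'ᵀ)))
      + (B * (-(Γ⁻¹ * (Bᵀ * Φ'ᵀ))))ᵀ * P' * (B * (-(Γ⁻¹ * (Bᵀ * Φ'ᵀ))))
    = Φ' * (B * Γ⁻¹ * Bᵀ) * Φ'ᵀ := by
  have hR' : R = Γ - Bᵀ * P' * B := by rw [hΓdef]; abel
  rw [hR']
  simp only [Matrix.transpose_neg, Matrix.transpose_mul, Matrix.transpose_add,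
    Matrix.transpose_transpose, hP's, hΓis, Matrix.mul_add, Matrix.add_mul,
    Matrix.mul_sub, Matrix.sub_mul, Matrix.neg_mul, Matrix.mul_neg, neg_neg,
    Matrix.mul_assoc, hc1, hc2]
  abel

private lemma ric4 (hP's : P'ᵀ = P') (hΓdef : Γ = R + Bᵀ * P' * B) (hΓis : Γ⁻¹ᵀ = Γ⁻¹)
    (hc1 : ∀ X : Matrix (Fin m) (Fin n) ℝ, Γ⁻¹ * (Γ * X) = X)
    (hc2 : ∀ X : Matrix (Fin m) (Fin n) ℝ, Γ * (Γ⁻¹ * X) = X) :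
    (B * (-(Γ⁻¹ * (Bᵀ * Φ'ᵀ))))ᵀ * Φ'ᵀ
    = -((-(Γ⁻¹ * (Bᵀ * Φ'ᵀ)))ᵀ * (R * (-(Γ⁻¹ * (Bᵀ * Φ'ᵀ))))
        + (B * (-(Γ⁻¹ * (Bᵀ * Φ'ᵀ))))ᵀ * (P' * (B * (-(Γ⁻¹ * (Bᵀ * Φ'ᵀ)))))) := by
  have hR' : R = Γ - Bᵀ * P' * B := by rw [hΓdef]; abel
  rw [hR']
  simp only [Matrix.transpose_neg, Matrix.transpose_mul, Matrix.transpose_add,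
    Matrix.transpose_transpose, hP's, hΓis, Matrix.mul_add, Matrix.add_mul,
    Matrix.mul_sub, Matrix.sub_mul, Matrix.neg_mul, Matrix.mul_neg, neg_neg,
    Matrix.mul_assoc, hc1, hc2]
  abel

end RiccatiAlgebra

private lemma psd_mulmul {p q : ℕ} (M : Matrix (Fin p) (Fin p) ℝ) (hM : M.PosSemidef)
    (C : Matrix (Fin p) (Fin q) ℝ) : (Cᵀ * M * C).PosSemidef := by
  have h := hM.conjTranspose_mul_mul_same C
  rwa [Matrix.conjTranspose_eq_transpose_of_trivial] at h

private lemma psd_symm {p : ℕ} {M : Matrix (Fin p) (Fin p) ℝ} (hM : M.PosSemidef) :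
    Mᵀ = M := by
  have h := hM.isHermitian
  rwa [Matrix.IsHermitian, Matrix.conjTranspose_eq_transpose_of_trivial] at h

/-- The Q-function defined by the backward Bellman recursion under the optimal
feedback controls equals `x(s)'P(s)x(s) + 2x(s)'Φ(s,N)'λ − λ'G(s)λ`. -/
theorem q_function_representation {n m N : ℕ}
    (A : ℕ → Matrix (Fin n) (Fin n) ℝ) (B : ℕ → Matrix (Fin n) (Fin m) ℝ)
    (Q H : Matrix (Fin n) (Fin n) ℝ) (R : Matrix (Fin m) (Fin m) ℝ)
    (hQ : Q.PosSemidef) (hH : H.PosSemidef) (hR : R.PosDef)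
    (P : ℕ → Matrix (Fin n) (Fin n) ℝ)
    (hPterm : P (N + 1) = H)
    (hP : ∀ k ≤ N, P k
        = (A k)ᵀ * P (k + 1) * A k + Q
          - (A k)ᵀ * P (k + 1) * B k * (R + (B k)ᵀ * P (k + 1) * B k)⁻¹
              * ((B k)ᵀ * P (k + 1) * A k))
    (Γ : ℕ → Matrix (Fin m) (Fin m) ℝ)
    (hΓ : ∀ k ≤ N, Γ k = R + (B k)ᵀ * P (k + 1) * B k)
    (K : ℕ → Matrix (Fin m) (Fin n) ℝ)
    (hK : ∀ k ≤ N, K k = -((Γ k)⁻¹ * ((B k)ᵀ * P (k + 1) * A k)))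
    (Ac : ℕ → Matrix (Fin n) (Fin n) ℝ)
    (hAc : ∀ k ≤ N, Ac k = A k + B k * K k)
    (K₁ : ℕ → Matrix (Fin m) (Fin n) ℝ)
    (hK₁ : ∀ k ≤ N, K₁ k = -((Γ k)⁻¹ * ((B k)ᵀ * (transMat Ac N (k + 1))ᵀ)))
    (lam : Fin n → ℝ)
    (x : ℕ → Fin n → ℝ) (ustar : ℕ → Fin m → ℝ)
    (hustar : ∀ k ≤ N, ustar k = K k *ᵥ x k + K₁ k *ᵥ lam)
    (hx : ∀ k ≤ N, x (k + 1) = A k *ᵥ x k + B k *ᵥ ustar k)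
    (Qf : ℕ → ℝ)
    (hQfterm : Qf (N + 1)
        = x (N + 1) ⬝ᵥ H *ᵥ x (N + 1) + 2 * (lam ⬝ᵥ x (N + 1)))
    (hQf : ∀ s ≤ N, Qf s
        = x s ⬝ᵥ Q *ᵥ x s + ustar s ⬝ᵥ R *ᵥ ustar s + Qf (s + 1)) :
    ∀ s ≤ N + 1, Qf s
      = x s ⬝ᵥ P s *ᵥ x s + 2 * (x s ⬝ᵥ (transMat Ac N s)ᵀ *ᵥ lam)
        - lam ⬝ᵥ (∑ j ∈ Finset.Icc s N,
            transMat Ac N (j + 1) * (B j * (Γ j)⁻¹ * (B j)ᵀ)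
              * (transMat Ac N (j + 1))ᵀ) *ᵥ lam := by
  have hRs : Rᵀ = R := psd_symm hR.posSemidef
  -- positivity of Γ given positive semidefiniteness of P (k+1)
  have hgam : ∀ k ≤ N, (P (k + 1)).PosSemidef → (Γ k).PosDef := by
    intro k hk hpsd
    rw [hΓ k hk]
    exact hR.add_posSemidef (psd_mulmul _ hpsd (B k))
  have hΓtrans : ∀ k ≤ N, (P (k + 1)).PosSemidef → (Γ k)ᵀ = Γ k := by
    intro k hk hpsd
    rw [hΓ k hk]
    simp [Matrix.transpose_add, Matrix.transpose_mul, psd_symm hpsd, hRs, Matrix.mul_assoc]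
  -- the Riccati completion-of-squares identity
  have hI1 : ∀ k ≤ N, (P (k + 1)).PosSemidef →
      Q + (K k)ᵀ * R * K k + (Ac k)ᵀ * P (k + 1) * Ac k = P k := by
    intro k hk hpsd
    have hpd := hgam k hk hpsd
    have hdet : IsUnit (Γ k).det := hpd.det_pos.ne'.isUnit
    have hc1 : ∀ X : Matrix (Fin m) (Fin n) ℝ, (Γ k)⁻¹ * (Γ k * X) = X := by
      intro X; rw [← Matrix.mul_assoc, Matrix.nonsing_inv_mul _ hdet, Matrix.one_mul]
    have hc2 : ∀ X : Matrix (Fin m) (Fin n) ℝ, Γ k * ((Γ k)⁻¹ * X) = X := by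
      intro X; rw [← Matrix.mul_assoc, Matrix.mul_nonsing_inv _ hdet, Matrix.one_mul]
    have hΓis : ((Γ k)⁻¹)ᵀ = (Γ k)⁻¹ := by
      rw [Matrix.transpose_nonsing_inv, hΓtrans k hk hpsd]
    rw [hP k hk, ← hΓ k hk, hAc k hk, hK k hk]
    exact ric1 (A k) (B k) (P (k + 1)) Q R (Γ k) (psd_symm hpsd) (hΓ k hk) hΓis hc1 hc2
  -- positive semidefiniteness of P
  have hPsdAux : ∀ d k, k ≤ N + 1 → N + 1 - k = d → (P k).PosSemidef := by
    intro d
    induction d with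
    | zero =>
      intro k hk hd
      have : k = N + 1 := by omega
      subst this
      rw [hPterm]; exact hH
    | succ d ih =>
      intro k hk hd
      have hkN : k ≤ N := by omega
      have hpsd : (P (k + 1)).PosSemidef := ih (k + 1) (by omega) (by omega)
      rw [← hI1 k hkN hpsd]
      exact (hQ.add (psd_mulmul _ hR.posSemidef (K k))).add (psd_mulmul _ hpsd (Ac k))
  have hPsd : ∀ k ≤ N + 1, (P k).PosSemidef := fun k hk => hPsdAux _ k hk rfl
  -- main downward induction
  have main : ∀ d s, s ≤ N + 1 → N + 1 - s = d →
      Qf s = x s ⬝ᵥ P s *ᵥ x s + 2 * (x s ⬝ᵥ (transMat Ac N s)ᵀ *ᵥ lam)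
        - lam ⬝ᵥ (∑ j ∈ Finset.Icc s N,
            transMat Ac N (j + 1) * (B j * (Γ j)⁻¹ * (B j)ᵀ)
              * (transMat Ac N (j + 1))ᵀ) *ᵥ lam := by
    intro d
    induction d with
    | zero =>
      intro s hs hd
      have : s = N + 1 := by omega
      subst this
      have h1 : transMat Ac N (N + 1) = 1 := by rw [transMat]; rw [dif_neg (by omega)]
      have h2 : Finset.Icc (N + 1) N = (∅ : Finset ℕ) := by
        apply Finset.Icc_eq_empty; omega
      rw [hQfterm, hPterm, h1, h2]
      simp [dotProduct_comm]
    | succ d ih =>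
      intro s hs hd
      have hsN : s ≤ N := by omega
      have IH := ih (s + 1) (by omega) (by omega)
      have hpsd : (P (s + 1)).PosSemidef := hPsd (s + 1) (by omega)
      have hpd := hgam s hsN hpsd
      have hdet : IsUnit (Γ s).det := hpd.det_pos.ne'.isUnit
      have hc1 : ∀ X : Matrix (Fin m) (Fin n) ℝ, (Γ s)⁻¹ * (Γ s * X) = X := by
        intro X; rw [← Matrix.mul_assoc, Matrix.nonsing_inv_mul _ hdet, Matrix.one_mul]
      have hc2 : ∀ X : Matrix (Fin m) (Fin n) ℝ, Γ s * ((Γ s)⁻¹ * X) = X := by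
        intro X; rw [← Matrix.mul_assoc, Matrix.mul_nonsing_inv _ hdet, Matrix.one_mul]
      have hΓis : ((Γ s)⁻¹)ᵀ = (Γ s)⁻¹ := by
        rw [Matrix.transpose_nonsing_inv, hΓtrans s hsN hpsd]
      -- dynamics in closed-loop form
      have hx' : x (s + 1) = Ac s *ᵥ x s + (B s * K₁ s) *ᵥ lam := by
        rw [hx s hsN, hustar s hsN, hAc s hsN]
        simp only [Matrix.mulVec_add, Matrix.add_mulVec, Matrix.mulVec_mulVec]
        abel
      -- transition matrix recursion
      have hTM : transMat Ac N s = transMat Ac N (s + 1) * Ac s := by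
        rw [transMat]; rw [dif_pos hsN]
      -- splitting the sum
      have hsum : (∑ j ∈ Finset.Icc s N,
            transMat Ac N (j + 1) * (B j * (Γ j)⁻¹ * (B j)ᵀ) * (transMat Ac N (j + 1))ᵀ)
          = transMat Ac N (s + 1) * (B s * (Γ s)⁻¹ * (B s)ᵀ) * (transMat Ac N (s + 1))ᵀ
            + ∑ j ∈ Finset.Icc (s + 1) N,
                transMat Ac N (j + 1) * (B j * (Γ j)⁻¹ * (B j)ᵀ)
                  * (transMat Ac N (j + 1))ᵀ := by
        rw [Finset.Icc_eq_cons_Ioc hsN, Finset.sum_cons, ← Finset.Icc_add_one_left_eq_Ioc]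
      -- the three matrix identities
      have h2 : (K s)ᵀ * (R * K₁ s) = -((Ac s)ᵀ * (P (s + 1) * (B s * K₁ s))) := by
        rw [hAc s hsN, hK s hsN, hK₁ s hsN]
        exact ric2 (A s) (B s) (P (s + 1)) (transMat Ac N (s + 1)) R (Γ s)
          (psd_symm hpsd) (hΓ s hsN) hΓis hc1 hc2
      have h2t : (K₁ s)ᵀ * (R * K s) = -((B s * K₁ s)ᵀ * (P (s + 1) * Ac s)) := by
        rw [hAc s hsN, hK s hsN, hK₁ s hsN]
        exact ric2t (A s) (B s) (P (s + 1)) (transMat Ac N (s + 1)) R (Γ s)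
          (psd_symm hpsd) (hΓ s hsN) hΓis hc1 hc2
      have h3 : (B s * K₁ s)ᵀ * (transMat Ac N (s + 1))ᵀ
          = -((K₁ s)ᵀ * (R * K₁ s) + (B s * K₁ s)ᵀ * (P (s + 1) * (B s * K₁ s))) := by
        rw [hK₁ s hsN]
        exact ric4 (B s) (P (s + 1)) (transMat Ac N (s + 1)) R (Γ s)
          (psd_symm hpsd) (hΓ s hsN) hΓis hc1 hc2
      have hI3 : (K₁ s)ᵀ * R * K₁ s + (B s * K₁ s)ᵀ * P (s + 1) * (B s * K₁ s)
          = transMat Ac N (s + 1) * (B s * (Γ s)⁻¹ * (B s)ᵀ)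
              * (transMat Ac N (s + 1))ᵀ := by
        rw [hK₁ s hsN]
        exact ric3 (B s) (P (s + 1)) (transMat Ac N (s + 1)) R (Γ s)
          (psd_symm hpsd) (hΓ s hsN) hΓis hc1 hc2
      rw [hQf s hsN, IH, hustar s hsN, hx', hTM, hsum, ← hI1 s hsN hpsd, ← hI3]
      exact key_expand (x s) lam Q (P (s + 1)) (Ac s) (B s * K₁ s)
        (transMat Ac N (s + 1)) _ (K s) (K₁ s) R h2 h2t h3
  intro s hs
  exact main (N + 1 - s) s hs rfl
end
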